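/- arXiv:math/0511290 — 2 statements merged into one kernel-verified Lean document; each statement's English description precedes it below -/
import Mathlib

section
/- If z is an indispensable move, then both its positive part z⁺ and its negative part z⁻ are indispensable monomials. -/
open scoped BigOperators

section Defs

variable {ι κ : Type*} [Fintype ι]

/-- Embed a frequency vector `x ∈ ℕ^ι` into `ℤ^ι`. -/
def natToInt (x : ι → ℕ) : ι → ℤ := fun i => (x i : ℤ)

/-- The fiber of `t`: all frequency vectors `x` with `A x = t`. -/
def fiberOf (A : Matrix κ ι ℤ) (t : κ → ℤ) : Set (ι → ℕ) :=
  {x | A.mulVec (natToInt x) = t}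

/-- A move for `A`: an integer vector in the kernel of `A`. -/
def IsMove (A : Matrix κ ι ℤ) (z : ι → ℤ) : Prop := A.mulVec z = 0

/-- The positive part `z⁺` of an integer vector, as a frequency vector. -/
def posOf (z : ι → ℤ) : ι → ℕ := fun i => (z i).toNat

/-- The negative part `z⁻` of an integer vector, as a frequency vector. -/
def negOf (z : ι → ℤ) : ι → ℕ := fun i => (-z i).toNat

/-- The degree of a move: `deg z = |z⁺|`. -/
def degOf (z : ι → ℤ) : ℕ := ∑ i, posOf z i

/-- One step: add or subtract one move of `B`, staying in `ℕ^ι`. -/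
def MStep (B : Set (ι → ℤ)) (x y : ι → ℕ) : Prop :=
  ∃ z ∈ B, natToInt y = natToInt x + z ∨ natToInt y = natToInt x - z

/-- `y` is accessible from `x` by the moves of `B` (staying nonnegative throughout,
since all intermediate points are frequency vectors). -/
def Accessible (B : Set (ι → ℤ)) : (ι → ℕ) → (ι → ℕ) → Prop :=
  Relation.ReflTransGen (MStep B)

/-- A Markov basis: a finite set of moves such that every fiber forms a single
equivalence class for mutual accessibility. -/
def IsMarkovBasis (A : Matrix κ ι ℤ) (B : Set (ι → ℤ)) : Prop :=
  B.Finite ∧ (∀ z ∈ B, IsMove A z) ∧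
    ∀ t : κ → ℤ, ∀ x ∈ fiberOf A t, ∀ y ∈ fiberOf A t, Accessible B x y

/-- A minimal Markov basis: no proper subset is a Markov basis. -/
def IsMinimalMarkovBasis (A : Matrix κ ι ℤ) (B : Set (ι → ℤ)) : Prop :=
  IsMarkovBasis A B ∧ ∀ B' ⊂ B, ¬ IsMarkovBasis A B'

/-- An indispensable monomial: every Markov basis contains a move whose
positive or negative part is `x`. -/
def IsIndispensableMonomial (A : Matrix κ ι ℤ) (x : ι → ℕ) : Prop :=
  ∀ B : Set (ι → ℤ), IsMarkovBasis A B → ∃ z ∈ B, posOf z = x ∨ negOf z = x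

/-- `B_n`: the set of moves of degree at most `n`. -/
def Bmoves (A : Matrix κ ι ℤ) (n : ℕ) : Set (ι → ℤ) :=
  {z | IsMove A z ∧ degOf z ≤ n}

/-- The sample size `|t|` of a sufficient statistic `t` (well defined on nonempty
fibers under homogeneity). -/
noncomputable def sampleSize (A : Matrix κ ι ℤ) (t : κ → ℤ) : ℕ :=
  sInf {n | ∃ x ∈ fiberOf A t, ∑ i, x i = n}

/-- The `B_{|t|-1}`-equivalence classes of the fiber of `t`. -/
noncomputable def fiberClasses (A : Matrix κ ι ℤ) (t : κ → ℤ) : Set (Set (ι → ℕ)) :=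
  {C | ∃ x ∈ fiberOf A t,
    C = {y | y ∈ fiberOf A t ∧ Accessible (Bmoves A (sampleSize A t - 1)) x y}}

/-- Homogeneity: some rational vector `w` has `w ⬝ aᵢ = 1` for every column `aᵢ`. -/
def IsHomogeneousMatrix [Fintype κ] (A : Matrix κ ι ℤ) : Prop :=
  ∃ w : κ → ℚ, ∀ i : ι, ∑ j, w j * (A j i : ℚ) = 1

end Defs

/-- An indispensable move: a nonzero move whose fiber consists exactly of its positive
and negative parts. -/
def IsIndispensableMove {p d : ℕ} (A : Matrix (Fin d) (Fin p) ℤ) (z : Fin p → ℤ) : Prop :=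
  IsMove A z ∧ z ≠ 0 ∧
    fiberOf A (A.mulVec (natToInt (posOf z))) = {posOf z, negOf z}


section Aux

variable {ι κ : Type*} [Fintype ι]

lemma natToInt_sub_eq (z : ι → ℤ) :
    natToInt (posOf z) - natToInt (negOf z) = z := by
  funext i
  simp [natToInt, posOf, negOf, Int.toNat_sub_toNat_neg]

lemma posOf_neg (z : ι → ℤ) : posOf (-z) = negOf z := by
  funext i; simp [posOf, negOf]

lemma negOf_neg (z : ι → ℤ) : negOf (-z) = posOf z := by
  funext i; simp [posOf, negOf]

lemma mstep_fiber {A : Matrix κ ι ℤ} {B : Set (ι → ℤ)}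
    (hB : ∀ w ∈ B, IsMove A w) {t : κ → ℤ} {x y : ι → ℕ}
    (hx : x ∈ fiberOf A t) (hxy : MStep B x y) : y ∈ fiberOf A t := by
  obtain ⟨w, hw, h | h⟩ := hxy
  · simp only [fiberOf, Set.mem_setOf_eq] at hx ⊢
    rw [h, Matrix.mulVec_add, hx, hB w hw, add_zero]
  · simp only [fiberOf, Set.mem_setOf_eq] at hx ⊢
    rw [h, Matrix.mulVec_sub, hx, hB w hw, sub_zero]

lemma exists_changing_step {A : Matrix κ ι ℤ} {B : Set (ι → ℤ)}
    (hB : ∀ w ∈ B, IsMove A w) {t : κ → ℤ} {x y : ι → ℕ}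
    (h : Accessible B x y) (hx : x ∈ fiberOf A t) (hne : x ≠ y) :
    ∃ a b, a ∈ fiberOf A t ∧ b ∈ fiberOf A t ∧ a ≠ b ∧ MStep B a b := by
  induction h using Relation.ReflTransGen.head_induction_on with
  | refl => exact absurd rfl hne
  | @head a c hstep hacc ih =>
    by_cases hac : a = c
    · subst hac
      by_cases hcy : a = y
      · exact absurd hcy hne
      · exact ih hx hcy
    · exact ⟨a, c, hx, mstep_fiber hB hx hstep, hac, hstep⟩

end Aux

/-- both parts of an indispensable move are indispensable monomials. -/
theorem indispensableMove_parts_indispensable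
    {p d : ℕ} (hp : 0 < p) (hd : 0 < d)
    (A : Matrix (Fin d) (Fin p) ℤ) (hA : IsHomogeneousMatrix A) (z : Fin p → ℤ)
    (hz : IsIndispensableMove A z) :
    IsIndispensableMonomial A (posOf z) ∧ IsIndispensableMonomial A (negOf z) := by
  classical
  obtain ⟨hmove, hzne, hfib⟩ := hz
  set t := A.mulVec (natToInt (posOf z)) with ht
  have hsub : natToInt (posOf z) - natToInt (negOf z) = z := natToInt_sub_eq z
  have hposmem : posOf z ∈ fiberOf A t := by simp [fiberOf, ht]
  have hnegmem : negOf z ∈ fiberOf A t := by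
    simp only [fiberOf, Set.mem_setOf_eq, ht]
    have : natToInt (negOf z) = natToInt (posOf z) - z := by
      linear_combination -hsub
    rw [this, Matrix.mulVec_sub, hmove, sub_zero]
  have hpn : posOf z ≠ negOf z := by
    intro h
    apply hzne
    rw [← hsub, h, sub_self]
  -- key claim: every Markov basis contains z or -z (up to the move found)
  have key : ∀ B : Set (Fin p → ℤ), IsMarkovBasis A B → ∃ w ∈ B, w = z ∨ w = -z := by
    intro B hB
    obtain ⟨hfin, hmoves, hconn⟩ := hB
    have hacc := hconn t (posOf z) hposmem (negOf z) hnegmem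
    obtain ⟨a, b, ha, hb, hab, w, hw, hstep⟩ :=
      exists_changing_step hmoves hacc hposmem hpn
    rw [hfib] at ha hb
    refine ⟨w, hw, ?_⟩
    have hPN : natToInt (negOf z) = natToInt (posOf z) - z := by
      linear_combination -hsub
    rcases ha with ha | ha <;> rcases hb with hb | hb
    · exact absurd (ha.trans hb.symm) hab
    · -- a = posOf z, b = negOf z
      subst ha; subst hb
      rcases hstep with h | h
      · right
        have : w = natToInt (negOf z) - natToInt (posOf z) := by rw [h]; ring
        rw [this, hPN]; ring
      · left
        have : w = natToInt (posOf z) - natToInt (negOf z) := by rw [h]; ring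
        rw [this, hsub]
    · -- a = negOf z, b = posOf z
      subst ha; subst hb
      rcases hstep with h | h
      · left
        have : w = natToInt (posOf z) - natToInt (negOf z) := by rw [h]; ring
        rw [this, hsub]
      · right
        have : w = natToInt (negOf z) - natToInt (posOf z) := by rw [h]; ring
        rw [this, hPN]; ring
    · exact absurd (ha.trans hb.symm) hab
  constructor
  · intro B hB
    obtain ⟨w, hw, hwz | hwz⟩ := key B hB
    · exact ⟨w, hw, Or.inl (by rw [hwz])⟩
    · exact ⟨w, hw, Or.inr (by rw [hwz, negOf_neg])⟩
  · intro B hB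
    obtain ⟨w, hw, hwz | hwz⟩ := key B hB
    · exact ⟨w, hw, Or.inr (by rw [hwz])⟩
    · exact ⟨w, hw, Or.inl (by rw [hwz, posOf_neg])⟩
end

section
/- Let B be a minimal Markov basis and let t ∈ ℤ^d with F_t ≠ ∅. Write the partition of F_t into its B_{|t|−1}-equivalence classes as F_t = F_{t,1} ∪ ⋯ ∪ F_{t,K_t}, and set B_t = {moves z : Az⁺ = Az⁻ = t}. Then B ∩ B_t consists of exactly K_t − 1 moves, each of whose positive and negative parts lie in two different B_{|t|−1}-equivalence classes of F_t, and the graph whose vertices are the classes F_{t,1},…,F_{t,K_t} and which has, for each z ∈ B ∩ B_t, an edge joining the class containing z⁺ to the class containing z⁻, is a tree (connected and acyclic). -/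
/-!
Inside the fiber of `t`, two points lie in the same `B_{|t|-1}`-class iff moves of `B` of degree
`< |t|` join them: a Markov basis replaces a move `z` by a walk from `z⁻` to `z⁺`, and every move
of such a walk has degree at most `|z⁻| = deg z`. A `B`-step inside the fiber either has degree
`< |t|` and stays in its class, or has degree `|t|`, and then it is exactly `z⁻ → z⁺` for some
`z ∈ B ∩ B_t`; so the moves of `B ∩ B_t` connect the class graph. Minimality makes each
`z ∈ B ∩ B_t` separate its two classes in the graph of the remaining moves, for otherwise
`B \ {z}` would already join `z⁺` to `z⁻` and still be a Markov basis. A graph in which every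
labelled edge separates its ends this way is acyclic and has exactly one edge per label, so the
connected class graph is a tree with `K_t - 1` edges.
-/

open scoped BigOperators

/-- `B_t`: the set of moves `z` with `A z⁺ = A z⁻ = t`. -/
def movesOfFiber {p d : ℕ} (A : Matrix (Fin d) (Fin p) ℤ) (t : Fin d → ℤ) :
    Set (Fin p → ℤ) :=
  {z | IsMove A z ∧ A.mulVec (natToInt (posOf z)) = t ∧ A.mulVec (natToInt (negOf z)) = t}

open Matrix

namespace SimpleGraph

variable {α V : Type*}

def ofLabels (S : Set α) (f g : α → V) : SimpleGraph V :=
  fromEdgeSet ((fun a => s(f a, g a)) '' S)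

lemma Reachable.of_mk_eq {G : SimpleGraph V} {u v u' v' : V} (h : s(u, v) = s(u', v'))
    (huv : G.Reachable u v) : G.Reachable u' v' := by
  rcases Sym2.eq_iff.1 h with ⟨rfl, rfl⟩ | ⟨rfl, rfl⟩
  exacts [huv, huv.symm]

lemma reachable_fromEdgeSet_of_mk_mem {s : Set (Sym2 V)} {u v : V} (h : s(u, v) ∈ s) :
    (fromEdgeSet s).Reachable u v := by
  by_cases huv : u = v
  · exact huv ▸ Reachable.refl u
  · exact ((fromEdgeSet_adj _).2 ⟨h, huv⟩).reachable

variable {S : Set α} {f g : α → V}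

lemma reachable_ofLabels {a : α} (ha : a ∈ S) : (ofLabels S f g).Reachable (f a) (g a) :=
  reachable_fromEdgeSet_of_mk_mem ⟨a, ha, rfl⟩

section Separating

variable (hS : ∀ a ∈ S, ¬ (ofLabels (S \ {a}) f g).Reachable (f a) (g a))
include hS

lemma injOn_mk_of_forall_not_reachable : S.InjOn fun a => s(f a, g a) := by
  intro a ha b hb hab
  by_contra hne
  exact hS a ha ((reachable_ofLabels (S := S \ {a}) ⟨hb, Ne.symm hne⟩).of_mk_eq hab.symm)

lemma isAcyclic_ofLabels : (ofLabels S f g).IsAcyclic := by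
  rw [isAcyclic_iff_forall_adj_isBridge]
  intro v w hvw
  obtain ⟨⟨a, ha, hav⟩, -⟩ := (fromEdgeSet_adj _).1 hvw
  rw [isBridge_iff]
  intro hr
  refine hS a ha (Reachable.of_mk_eq hav.symm (hr.mono ?_))
  rw [deleteEdges, ofLabels, ← fromEdgeSet_sdiff]
  refine fromEdgeSet_mono ?_
  rintro _ ⟨⟨b, hb, rfl⟩, hne⟩
  exact ⟨b, ⟨hb, by rintro rfl; exact hne hav⟩, rfl⟩

lemma ncard_edgeSet_ofLabels : (ofLabels S f g).edgeSet.ncard = S.ncard := by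
  rw [ofLabels, edgeSet_fromEdgeSet, sdiff_eq_left.2,
    (injOn_mk_of_forall_not_reachable hS).ncard_image]
  rw [Set.disjoint_left]
  rintro _ ⟨a, ha, rfl⟩ hdiag
  exact hS a ha (Sym2.mk_isDiag_iff.1 hdiag ▸ Reachable.refl _)

end Separating

end SimpleGraph

section Moves

variable {ι κ : Type*} {A : Matrix κ ι ℤ} {t : κ → ℤ} {z : ι → ℤ} {x y : ι → ℕ}

lemma natToInt_add (x y : ι → ℕ) : natToInt (x + y) = natToInt x + natToInt y := by
  funext i; simp [natToInt]

lemma natToInt_posOf (z : ι → ℤ) : natToInt (posOf z) = natToInt (negOf z) + z := by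
  funext i; simp only [natToInt, posOf, negOf, Pi.add_apply]; omega

lemma exists_eq_negOf_add (h : natToInt y = natToInt x + z) :
    ∃ u, x = negOf z + u ∧ y = posOf z + u := by
  refine ⟨x - negOf z, funext fun i => ?_, funext fun i => ?_⟩ <;>
  · have := congrFun h i
    simp only [natToInt, posOf, negOf, Pi.add_apply, Pi.sub_apply] at this ⊢
    omega

lemma IsMove.negOf_mem_fiberOf [Fintype ι] (hz : IsMove A z) :
    negOf z ∈ fiberOf A (A *ᵥ natToInt (posOf z)) := by
  show _ = _
  rw [natToInt_posOf, Matrix.mulVec_add, hz, add_zero]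

lemma isMove_sub_of_mem_fiberOf [Fintype ι] (hx : x ∈ fiberOf A t) (hy : y ∈ fiberOf A t) :
    IsMove A (natToInt x - natToInt y) := by
  show _ = _
  rw [Matrix.mulVec_sub, hx, hy, sub_self]

variable [Fintype ι] [Fintype κ]

lemma IsMove.sum_eq_zero (hA : IsHomogeneousMatrix A) (hz : IsMove A z) : ∑ i, z i = 0 := by
  obtain ⟨w, hw⟩ := hA
  have hzq : A.map (Int.castRingHom ℚ) *ᵥ (Int.castRingHom ℚ ∘ z) = 0 := by
    funext j
    rw [← RingHom.map_mulVec, hz]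
    simp
  have : ∑ i, (z i : ℚ) = 0 := calc
    ∑ i, (z i : ℚ) = (w ᵥ* A.map (Int.castRingHom ℚ)) ⬝ᵥ (Int.castRingHom ℚ ∘ z) := by
      simp [dotProduct, Matrix.vecMul, hw]
    _ = 0 := by rw [← Matrix.dotProduct_mulVec, hzq, dotProduct_zero]
  exact_mod_cast this

lemma sum_eq_of_mem_fiberOf (hA : IsHomogeneousMatrix A) (hx : x ∈ fiberOf A t)
    (hy : y ∈ fiberOf A t) : ∑ i, x i = ∑ i, y i := by
  have := (isMove_sub_of_mem_fiberOf hx hy).sum_eq_zero hA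
  simp only [natToInt, Pi.sub_apply, Finset.sum_sub_distrib, sub_eq_zero] at this
  exact_mod_cast this

lemma sampleSize_eq (hA : IsHomogeneousMatrix A) (hx : x ∈ fiberOf A t) :
    sampleSize A t = ∑ i, x i := by
  have : {n | ∃ y ∈ fiberOf A t, ∑ i, y i = n} = {∑ i, x i} := by
    ext n
    constructor
    · rintro ⟨y, hy, rfl⟩
      exact sum_eq_of_mem_fiberOf hA hy hx
    · rintro rfl
      exact ⟨x, hx, rfl⟩
  rw [sampleSize, this, csInf_singleton]

lemma IsMove.degOf_eq_sum_negOf (hA : IsHomogeneousMatrix A) (hz : IsMove A z) :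
    degOf z = ∑ i, negOf z i :=
  sum_eq_of_mem_fiberOf hA rfl hz.negOf_mem_fiberOf

lemma degOf_le_sum_of_eq_add (hA : IsHomogeneousMatrix A) (hz : IsMove A z)
    (h : natToInt y = natToInt x + z) : degOf z ≤ ∑ i, x i := by
  obtain ⟨u, rfl, -⟩ := exists_eq_negOf_add h
  simp only [hz.degOf_eq_sum_negOf hA, Pi.add_apply, Finset.sum_add_distrib, le_self_add]

lemma eq_negOf_of_sum_le (hA : IsHomogeneousMatrix A) (hz : IsMove A z)
    (h : natToInt y = natToInt x + z) (hle : ∑ i, x i ≤ degOf z) :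
    x = negOf z ∧ y = posOf z := by
  obtain ⟨u, rfl, rfl⟩ := exists_eq_negOf_add h
  simp only [hz.degOf_eq_sum_negOf hA, Pi.add_apply, Finset.sum_add_distrib,
    add_le_iff_nonpos_right, nonpos_iff_eq_zero, Finset.sum_eq_zero_iff, Finset.mem_univ,
    forall_const] at hle
  have hu : u = 0 := funext hle
  simp [hu]

lemma finite_fiberOf (hA : IsHomogeneousMatrix A) (t : κ → ℤ) : (fiberOf A t).Finite := by
  refine (Set.Finite.pi (t := fun _ => Set.Iic (sampleSize A t)) fun _ => Set.finite_Iic _).subset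
    fun x hx => ?_
  simp only [Set.mem_pi, Set.mem_univ, Set.mem_Iic, forall_const, sampleSize_eq hA hx]
  exact fun i => Finset.single_le_sum (fun _ _ => Nat.zero_le _) (Finset.mem_univ i)

end Moves

section Accessibility

variable {ι : Type*} {B B' : Set (ι → ℤ)} {x y : ι → ℕ} {z : ι → ℤ}

lemma mStep_negOf_posOf (hz : z ∈ B) : MStep B (negOf z) (posOf z) :=
  ⟨z, hz, .inl (natToInt_posOf z)⟩

lemma MStep.symm (h : MStep B x y) : MStep B y x := by
  obtain ⟨z, hz, h | h⟩ := h
  · exact ⟨z, hz, .inr (by rw [h, add_sub_cancel_right])⟩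
  · exact ⟨z, hz, .inl (by rw [h, sub_add_cancel])⟩

lemma Accessible.symm (h : Accessible B x y) : Accessible B y x := by
  induction h with
  | refl => exact .refl
  | tail _ hstep ih => exact ih.head hstep.symm

lemma Accessible.mono (hBB' : B ⊆ B') (h : Accessible B x y) : Accessible B' x y :=
  Relation.ReflTransGen.mono (fun _ _ ⟨z, hz, hstep⟩ => ⟨z, hBB' hz, hstep⟩) _ _ h

lemma Accessible.of_forall_eq_add
    (hB : ∀ z ∈ B, ∀ x y, natToInt y = natToInt x + z → Accessible B' x y)
    (h : Accessible B x y) : Accessible B' x y := by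
  refine Relation.reflTransGen_closed (fun a b ⟨z, hz, hab⟩ => ?_) _ _ h
  rcases hab with hab | hab
  · exact hB z hz a b hab
  · exact (hB z hz b a (by rw [hab, sub_add_cancel])).symm

lemma Accessible.add_right (u : ι → ℕ) (h : Accessible B x y) :
    Accessible B (x + u) (y + u) := by
  refine Relation.ReflTransGen.lift (· + u) (fun a b ⟨z, hz, hab⟩ => ⟨z, hz, ?_⟩) _ _ h
  simp only [natToInt_add]
  rcases hab with hab | hab
  · exact .inl (by rw [hab]; abel)
  · exact .inr (by rw [hab]; abel)

lemma accessible_of_eq_add (hz : Accessible B (negOf z) (posOf z))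
    (h : natToInt y = natToInt x + z) : Accessible B x y := by
  obtain ⟨u, rfl, rfl⟩ := exists_eq_negOf_add h
  exact hz.add_right u

variable {κ : Type*} [Fintype ι] {A : Matrix κ ι ℤ} {t : κ → ℤ}

lemma MStep.mem_fiberOf (hB : ∀ z ∈ B, IsMove A z) (hx : x ∈ fiberOf A t)
    (h : MStep B x y) : y ∈ fiberOf A t := by
  have hx : A *ᵥ natToInt x = t := hx
  show A *ᵥ natToInt y = t
  obtain ⟨z, hz, h | h⟩ := h
  · rw [h, Matrix.mulVec_add, hx, hB z hz, add_zero]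
  · rw [h, Matrix.mulVec_sub, hx, hB z hz, sub_zero]

lemma Accessible.mem_fiberOf (hB : ∀ z ∈ B, IsMove A z) (hx : x ∈ fiberOf A t)
    (h : Accessible B x y) : y ∈ fiberOf A t := by
  induction h with
  | refl => exact hx
  | tail _ hstep ih => exact hstep.mem_fiberOf hB ih

variable [Fintype κ]

lemma MStep.inter_bmoves (hA : IsHomogeneousMatrix A) (hB : ∀ z ∈ B, IsMove A z)
    (hx : x ∈ fiberOf A t) (h : MStep B x y) : MStep (B ∩ Bmoves A (sampleSize A t)) x y := by
  obtain ⟨z, hz, hxy⟩ := h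
  refine ⟨z, ⟨hz, hB z hz, ?_⟩, hxy⟩
  rcases hxy with hxy | hxy
  · rw [sampleSize_eq hA hx]
    exact degOf_le_sum_of_eq_add hA (hB z hz) hxy
  · rw [sampleSize_eq hA (MStep.mem_fiberOf hB hx ⟨z, hz, .inr hxy⟩)]
    exact degOf_le_sum_of_eq_add hA (hB z hz) (x := y) (y := x) (by rw [hxy, sub_add_cancel])

lemma Accessible.inter_bmoves (hA : IsHomogeneousMatrix A) (hB : ∀ z ∈ B, IsMove A z)
    (hx : x ∈ fiberOf A t) (h : Accessible B x y) :
    Accessible (B ∩ Bmoves A (sampleSize A t)) x y := by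
  induction h with
  | refl => exact .refl
  | tail hxy hstep ih =>
    exact ih.tail (hstep.inter_bmoves hA hB (Accessible.mem_fiberOf hB hx hxy))

end Accessibility

section MarkovBasis

variable {ι κ : Type*} [Fintype ι] {A : Matrix κ ι ℤ} {B : Set (ι → ℤ)}
  {x y : ι → ℕ} {z : ι → ℤ}

lemma bmoves_mono {m m' : ℕ} (h : m ≤ m') : Bmoves A m ⊆ Bmoves A m' :=
  fun _ hz => ⟨hz.1, hz.2.trans h⟩

lemma IsMarkovBasis.diff_singleton (hMB : IsMarkovBasis A B)
    (h : Accessible (B \ {z}) (negOf z) (posOf z)) : IsMarkovBasis A (B \ {z}) := by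
  refine ⟨hMB.1.subset Set.sdiff_subset, fun w hw => hMB.2.1 w hw.1, fun t x hx y hy => ?_⟩
  refine (hMB.2.2 t x hx y hy).of_forall_eq_add fun w hw x y hxy => ?_
  by_cases hwz : w = z
  · subst hwz
    exact accessible_of_eq_add h hxy
  · exact .single ⟨w, ⟨hw, hwz⟩, .inl hxy⟩

lemma IsMinimalMarkovBasis.not_accessible_diff_singleton (hB : IsMinimalMarkovBasis A B)
    (hz : z ∈ B) : ¬ Accessible (B \ {z}) (posOf z) (negOf z) :=
  fun h => hB.2 _ (Set.sdiff_singleton_ssubset.2 hz) (hB.1.diff_singleton h.symm)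

variable [Fintype κ] (hA : IsHomogeneousMatrix A)
include hA

-- `z⁻` and `z⁺` lie in a common fiber of sample size `deg z`.
lemma IsMarkovBasis.accessible_inter_bmoves (hMB : IsMarkovBasis A B) {m : ℕ}
    (h : Accessible (Bmoves A m) x y) : Accessible (B ∩ Bmoves A m) x y := by
  refine h.of_forall_eq_add fun z hz x y hxy => accessible_of_eq_add ?_ hxy
  obtain ⟨hz, hdeg⟩ := hz
  have hneg := hz.negOf_mem_fiberOf
  have := (hMB.2.2 _ _ hneg _ rfl).inter_bmoves hA hMB.2.1 hneg
  rw [sampleSize_eq hA hneg, ← hz.degOf_eq_sum_negOf hA] at this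
  exact this.mono (Set.inter_subset_inter_right _ (bmoves_mono hdeg))

lemma IsMinimalMarkovBasis.degOf_pos (hB : IsMinimalMarkovBasis A B) (hz : z ∈ B) :
    0 < degOf z := by
  refine Nat.pos_of_ne_zero fun h0 => hB.not_accessible_diff_singleton hz ?_
  have hneg := (hB.1.2.1 z hz).degOf_eq_sum_negOf hA
  rw [h0, eq_comm, Finset.sum_eq_zero_iff] at hneg
  rw [degOf, Finset.sum_eq_zero_iff] at h0
  rw [show posOf z = negOf z from funext fun i =>
    (h0 i (Finset.mem_univ i)).trans (hneg i (Finset.mem_univ i)).symm]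
  exact .refl

end MarkovBasis

lemma Set.ncard_preimage_val {α : Type*} (s t : Set α) :
    ((↑) ⁻¹' t : Set s).ncard = (t ∩ s).ncard := by
  rw [Set.inter_comm, ← Subtype.image_preimage_coe, Subtype.val_injective.injOn.ncard_image]

section Classes

variable {ι κ : Type*} [Fintype ι] {A : Matrix κ ι ℤ} {t : κ → ℤ}

def classOf (A : Matrix κ ι ℤ) (t : κ → ℤ) (x : ι → ℕ) : Set (ι → ℕ) :=
  {y | y ∈ fiberOf A t ∧ Accessible (Bmoves A (sampleSize A t - 1)) x y}

def fiberClass (x : fiberOf A t) : fiberClasses A t := ⟨classOf A t x, x, x.2, rfl⟩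

lemma fiberClass_surjective : Function.Surjective (fiberClass (A := A) (t := t)) := by
  rintro ⟨C, x, hx, rfl⟩
  exact ⟨⟨x, hx⟩, rfl⟩

lemma fiberClass_eq_iff_mem {x : fiberOf A t} {C : fiberClasses A t} :
    fiberClass x = C ↔ x.1 ∈ C.1 := by
  obtain ⟨c, rfl⟩ := fiberClass_surjective C
  refine ⟨fun h => h ▸ ⟨x.2, .refl⟩, fun ⟨_, hcx⟩ => Subtype.ext <| Set.ext fun y =>
    and_congr_right fun _ => ⟨hcx.trans, hcx.symm.trans⟩⟩

lemma fiberClass_eq_fiberClass_iff {x y : fiberOf A t} :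
    fiberClass x = fiberClass y ↔ Accessible (Bmoves A (sampleSize A t - 1)) x y :=
  fiberClass_eq_iff_mem.trans ⟨fun h => h.2.symm, fun h => ⟨x.2, h.symm⟩⟩

lemma finite_fiberClasses [Fintype κ] (hA : IsHomogeneousMatrix A) : Finite (fiberClasses A t) :=
  have := (finite_fiberOf hA t).to_subtype
  .of_surjective _ fiberClass_surjective

end Classes

section ClassGraph

open SimpleGraph

variable {p d : ℕ} {A : Matrix (Fin d) (Fin p) ℤ} {t : Fin d → ℤ} {B : Set (Fin p → ℤ)}

def posClass (z : movesOfFiber A t) : fiberClasses A t := fiberClass ⟨posOf z, z.2.2.1⟩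

def negClass (z : movesOfFiber A t) : fiberClasses A t := fiberClass ⟨negOf z, z.2.2.2⟩

variable (A t B) in
def classGraph : SimpleGraph (fiberClasses A t) :=
  ofLabels (Subtype.val ⁻¹' B) posClass negClass

lemma fromRel_eq_classGraph :
    fromRel (fun C₁ C₂ : fiberClasses A t =>
      ∃ z ∈ B ∩ movesOfFiber A t, posOf z ∈ C₁.1 ∧ negOf z ∈ C₂.1) =
    classGraph A t B := by
  have key : ∀ C₁ C₂ : fiberClasses A t,
      (∃ z ∈ B ∩ movesOfFiber A t, posOf z ∈ C₁.1 ∧ negOf z ∈ C₂.1) ↔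
      ∃ e ∈ Subtype.val ⁻¹' B, posClass e = C₁ ∧ negClass e = C₂ := by
    intro C₁ C₂
    simp only [posClass, negClass, fiberClass_eq_iff_mem]
    exact ⟨fun ⟨z, ⟨hzB, hz⟩, h⟩ => ⟨⟨z, hz⟩, hzB, h⟩,
      fun ⟨z, hzB, h⟩ => ⟨z, ⟨hzB, z.2⟩, h⟩⟩
  ext C₁ C₂
  simp only [classGraph, ofLabels, fromRel_adj, fromEdgeSet_adj, key, Set.mem_image, Sym2.eq_iff]
  rw [and_comm]
  simp only [and_or_left, exists_or]

variable (hA : IsHomogeneousMatrix A) (hMB : IsMarkovBasis A B)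
include hA hMB

lemma accessible_of_fiberClass_eq {x y : fiberOf A t} (h : fiberClass x = fiberClass y) :
    Accessible (B ∩ Bmoves A (sampleSize A t - 1)) x y :=
  hMB.accessible_inter_bmoves hA (fiberClass_eq_fiberClass_iff.1 h)

lemma accessible_of_reachable {B' : Set (Fin p → ℤ)} {T : Set (movesOfFiber A t)}
    (hB' : B ∩ Bmoves A (sampleSize A t - 1) ⊆ B') (hT : ∀ e ∈ T, e.1 ∈ B')
    {x y : fiberOf A t}
    (h : (ofLabels T posClass negClass).Reachable (fiberClass x) (fiberClass y)) :
    Accessible B' x y := by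
  let P (C D : fiberClasses A t) : Prop :=
    ∀ x y, fiberClass x = C → fiberClass y = D → Accessible B' x y
  have hrefl (C) : P C C := fun x y hx hy =>
    (accessible_of_fiberClass_eq hA hMB (hx.trans hy.symm)).mono hB'
  have htrans {C D E} (hCD : P C D) (hDE : P D E) : P C E := fun x y hx hy => by
    obtain ⟨w, hw⟩ := fiberClass_surjective D
    exact (hCD x w hx hw).trans (hDE w y hw hy)
  have hedge {e} (he : e ∈ T) : P (posClass e) (negClass e) := fun x y hx hy =>
    (hrefl _ x ⟨posOf e, e.2.2.1⟩ hx rfl).trans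
      (.head (mStep_negOf_posOf (hT e he)).symm (hrefl _ ⟨negOf e, e.2.2.2⟩ y rfl hy))
  have hadj {C D} (hCD : (ofLabels T posClass negClass).Adj C D) : P C D := by
    obtain ⟨⟨e, he, hCD⟩, -⟩ := (fromEdgeSet_adj _).1 hCD
    rcases Sym2.eq_iff.1 hCD with ⟨rfl, rfl⟩ | ⟨rfl, rfl⟩
    · exact hedge he
    · exact fun x y hx hy => (hedge he y x hy hx).symm
  suffices P (fiberClass x) (fiberClass y) from this x y rfl rfl
  rw [reachable_iff_reflTransGen] at h
  generalize fiberClass y = D at h ⊢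
  induction h with
  | refl => exact hrefl _
  | tail _ hDE ih => exact htrans ih (hadj hDE)

lemma reachable_of_mStep {x y : fiberOf A t} (h : MStep B x y) :
    (classGraph A t B).Reachable (fiberClass x) (fiberClass y) := by
  suffices key : ∀ {x y : fiberOf A t}, ∀ z ∈ B, natToInt y = natToInt x + z →
      (classGraph A t B).Reachable (fiberClass x) (fiberClass y) by
    obtain ⟨z, hz, hxy | hxy⟩ := h
    · exact key z hz hxy
    · exact (key z hz (by rw [hxy, sub_add_cancel])).symm
  intro x y z hz hxy
  have hzm := hMB.2.1 z hz
  by_cases hdeg : degOf z ≤ sampleSize A t - 1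
  · rw [fiberClass_eq_fiberClass_iff.2 (.single ⟨z, ⟨hzm, hdeg⟩, .inl hxy⟩)]
  · obtain ⟨hx, hy⟩ := eq_negOf_of_sum_le hA hzm hxy (by rw [← sampleSize_eq hA x.2]; omega)
    have hzt : z ∈ movesOfFiber A t := ⟨hzm, hy ▸ y.2, hx ▸ x.2⟩
    have hxe : fiberClass x = negClass ⟨z, hzt⟩ := congrArg fiberClass (Subtype.ext hx)
    have hye : fiberClass y = posClass ⟨z, hzt⟩ := congrArg fiberClass (Subtype.ext hy)
    rw [hxe, hye]
    exact (reachable_ofLabels (S := Subtype.val ⁻¹' B) (a := ⟨z, hzt⟩) hz).symm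

lemma connected_classGraph (ht : (fiberOf A t).Nonempty) : (classGraph A t B).Connected := by
  have : Nonempty (fiberOf A t) := ht.to_subtype
  refine (connected_iff _).2 ⟨fun C D => ?_, this.map fiberClass⟩
  obtain ⟨x, rfl⟩ := fiberClass_surjective C
  obtain ⟨⟨y, hy⟩, rfl⟩ := fiberClass_surjective D
  have hxy := hMB.2.2 t x x.2 y hy
  induction hxy with
  | refl => rfl
  | tail hxb hbc ih =>
    have hb := Accessible.mem_fiberOf hMB.2.1 x.2 hxb
    exact (ih hb).trans (reachable_of_mStep hA hMB (x := ⟨_, hb⟩) (y := ⟨_, hy⟩) hbc)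

end ClassGraph

open SimpleGraph in
-- `deg e = |t| > 0` keeps `e` out of `B_{|t|-1}`, so a path would join `e⁺` to `e⁻` in `B \ {e}`.
lemma IsMinimalMarkovBasis.not_reachable_ofLabels_diff {p d : ℕ}
    {A : Matrix (Fin d) (Fin p) ℤ} {t : Fin d → ℤ} {B : Set (Fin p → ℤ)}
    (hA : IsHomogeneousMatrix A) (hB : IsMinimalMarkovBasis A B)
    {e : movesOfFiber A t} (he : e.1 ∈ B) :
    ¬ (ofLabels (Subtype.val ⁻¹' B \ {e}) posClass negClass).Reachable
      (posClass e) (negClass e) := by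
  intro h
  have hdeg : degOf e.1 = sampleSize A t := (sampleSize_eq hA e.2.2.1).symm
  have hpos := hB.degOf_pos hA he
  refine hB.not_accessible_diff_singleton he (accessible_of_reachable hA hB.1 ?_ ?_ h)
  · rintro w ⟨hw, -, hwdeg⟩
    exact ⟨hw, by rintro rfl; omega⟩
  · rintro e' ⟨he', hne⟩
    exact ⟨he', fun h => hne (Subtype.ext h)⟩

theorem minimalMarkovBasis_structure_general
    {p d : ℕ}
    (A : Matrix (Fin d) (Fin p) ℤ) (hA : IsHomogeneousMatrix A)
    (B : Set (Fin p → ℤ)) (hB : IsMinimalMarkovBasis A B)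
    (t : Fin d → ℤ) (ht : (fiberOf A t).Nonempty) :
    (B ∩ movesOfFiber A t).ncard = (fiberClasses A t).ncard - 1 ∧
    (∀ z ∈ B ∩ movesOfFiber A t,
        ¬ Accessible (Bmoves A (sampleSize A t - 1)) (posOf z) (negOf z)) ∧
    (SimpleGraph.fromRel (fun C₁ C₂ : ↥(fiberClasses A t) =>
        ∃ z ∈ B ∩ movesOfFiber A t, posOf z ∈ C₁.1 ∧ negOf z ∈ C₂.1)).IsTree := by
  have hsep (e) (he : e ∈ Subtype.val ⁻¹' B) := hB.not_reachable_ofLabels_diff hA (t := t) he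
  have htree : (classGraph A t B).IsTree :=
    ⟨connected_classGraph hA hB.1 ht, SimpleGraph.isAcyclic_ofLabels hsep⟩
  have := finite_fiberClasses hA (t := t)
  refine ⟨?_, fun z hz hacc => ?_, fromRel_eq_classGraph ▸ htree⟩
  · rw [← Set.ncard_preimage_val, ← SimpleGraph.ncard_edgeSet_ofLabels hsep,
      ← Nat.card_coe_set_eq (fiberClasses A t),
      ← (SimpleGraph.isTree_iff_connected_and_card.1 htree).2]
    rfl
  · have hcl : posClass ⟨z, hz.2⟩ = negClass ⟨z, hz.2⟩ :=
      fiberClass_eq_fiberClass_iff.2 hacc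
    exact hsep ⟨z, hz.2⟩ hz.1 (hcl ▸ .refl _)

/-- a minimal Markov basis meets `B_t` in exactly `K_t - 1` moves, each
connecting two different `B_{|t|-1}`-equivalence classes of the fiber of `t`, and the
graph induced on the equivalence classes by these moves is a tree. -/
theorem minimalMarkovBasis_structure
    {p d : ℕ} (hp : 0 < p) (hd : 0 < d)
    (A : Matrix (Fin d) (Fin p) ℤ) (hA : IsHomogeneousMatrix A)
    (B : Set (Fin p → ℤ)) (hB : IsMinimalMarkovBasis A B)
    (t : Fin d → ℤ) (ht : (fiberOf A t).Nonempty) :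
    (B ∩ movesOfFiber A t).ncard = (fiberClasses A t).ncard - 1 ∧
    (∀ z ∈ B ∩ movesOfFiber A t,
        ¬ Accessible (Bmoves A (sampleSize A t - 1)) (posOf z) (negOf z)) ∧
    (SimpleGraph.fromRel (fun C₁ C₂ : ↥(fiberClasses A t) =>
        ∃ z ∈ B ∩ movesOfFiber A t, posOf z ∈ C₁.1 ∧ negOf z ∈ C₂.1)).IsTree :=
  minimalMarkovBasis_structure_general A hA B hB t ht
end
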